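/- arXiv:1410.6960 — 2 statements merged into one kernel-verified Lean document; each statement's English description precedes it below -/
import Mathlib

section
/- Pavelka-style completeness: if L and Y are finite, then for every set Σ of FAIs and all A, B ∈ L^Y, the degree of S-provability |A ⇒ B|^S_Σ = ⋁{c ∈ L : Σ ⊢^S A ⇒ c ⊗ B} equals the degree of semantic entailment ||A ⇒ B||^S_Σ. -/
/-- A complete residuated lattice: a complete lattice with a commutative, associative
multiplication whose neutral element is the top element and which distributes over
arbitrary suprema. -/
class CompleteResiduatedLattice (L : Type*) extends CompleteLattice L, CommMonoid L where
  mul_sSup : ∀ (a : L) (s : Set L), a * sSup s = ⨆ b ∈ s, a * b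
  one_eq_top : (1 : L) = ⊤

namespace FAIparam

variable {L : Type*} {Y : Type*} {X : Type*}

/-- A fuzzy attribute implication (FAI): a pair (antecedent, consequent) of L-sets in Y. -/
abbrev FAI (L Y : Type*) := (Y → L) × (Y → L)

/-- A pair of operators on L-sets in Y. -/
abbrev OpPair (L Y : Type*) := ((Y → L) → (Y → L)) × ((Y → L) → (Y → L))

/-- S is a parameterization: every pair in S is a monotone Galois connection, the identity
pair belongs to S, and S is closed under composition ⟨f₁,g₁⟩∘⟨f₂,g₂⟩ = ⟨f₁∘f₂, g₂∘g₁⟩. -/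
def IsParam [CompleteResiduatedLattice L] (S : Set (OpPair L Y)) : Prop :=
  (∀ p ∈ S, ∀ A B : Y → L, p.1 A ≤ B ↔ A ≤ p.2 B) ∧
  (((id, id) : OpPair L Y) ∈ S) ∧
  (∀ p ∈ S, ∀ q ∈ S, ((p.1 ∘ q.1, q.2 ∘ p.2) : OpPair L Y) ∈ S)

/-- M ⊨^S A ⇒ B : for every ⟨f,g⟩ ∈ S, f(A) ⊆ M implies f(B) ⊆ M. -/
def Sat [CompleteResiduatedLattice L] (S : Set (OpPair L Y)) (M : Y → L) (φ : FAI L Y) : Prop :=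
  ∀ p ∈ S, p.1 φ.1 ≤ M → p.1 φ.2 ≤ M

/-- The set Mod^S(Th) of S-models of a theory Th. -/
def ModS [CompleteResiduatedLattice L] (S : Set (OpPair L Y)) (Th : Set (FAI L Y)) :
    Set (Y → L) :=
  {M | ∀ φ ∈ Th, Sat S M φ}

/-- Semantic entailment Th ⊨^S φ, i.e. Mod^S(Th) ⊆ Mod^S({φ}). -/
def Entails [CompleteResiduatedLattice L] (S : Set (OpPair L Y)) (Th : Set (FAI L Y))
    (φ : FAI L Y) : Prop :=
  ModS S Th ⊆ ModS S {φ}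

/-- [A]^S_Th : the least S-model of Th containing A (intersection of all such models). -/
def clS [CompleteResiduatedLattice L] (S : Set (OpPair L Y)) (Th : Set (FAI L Y))
    (A : Y → L) : Y → L :=
  sInf {M | M ∈ ModS S Th ∧ A ≤ M}

/-- S-closure operator on L^Y. -/
def IsSClosureOp [CompleteResiduatedLattice L] (S : Set (OpPair L Y))
    (c : (Y → L) → (Y → L)) : Prop :=
  (∀ A, A ≤ c A) ∧ (∀ A B, A ≤ B → c A ≤ c B) ∧
  (∀ p ∈ S, ∀ A, c (p.2 (c A)) ≤ p.2 (c A))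

/-- S-closure system in ⟨L^Y, ⊆⟩. -/
def IsSClosureSys [CompleteResiduatedLattice L] (S : Set (OpPair L Y))
    (𝒮 : Set (Y → L)) : Prop :=
  (∀ T ⊆ 𝒮, sInf T ∈ 𝒮) ∧ (∀ p ∈ S, ∀ M ∈ 𝒮, p.2 M ∈ 𝒮)

/-- c_𝒮(A) = ⋂{B ∈ 𝒮 : A ⊆ B}. -/
def clSys [CompleteResiduatedLattice L] (𝒮 : Set (Y → L)) (A : Y → L) : Y → L :=
  sInf {B | B ∈ 𝒮 ∧ A ≤ B}

/-- I ⊨^S A ⇒ B for an L-context ⟨X,Y,I⟩ (with I curried, I x = I_x). -/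
def CtxSat [CompleteResiduatedLattice L] (S : Set (OpPair L Y)) (I : X → Y → L)
    (φ : FAI L Y) : Prop :=
  ∀ x, Sat S (I x) φ

/-- S_g : the set of upper adjoints occurring in S. -/
def Sg [CompleteResiduatedLattice L] (S : Set (OpPair L Y)) : Set ((Y → L) → (Y → L)) :=
  {g | ∃ f, (f, g) ∈ S}

/-- F^↑ = ⋂{g(I_x) : ⟨x,g⟩ ∈ F}. -/
def upOp [CompleteResiduatedLattice L] (I : X → Y → L)
    (F : Set (X × ((Y → L) → (Y → L)))) : Y → L :=
  ⨅ xg ∈ F, xg.2 (I xg.1)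

/-- G^↓ = {⟨x,g⟩ ∈ X × S_g : G ⊆ g(I_x)}. -/
def downOp [CompleteResiduatedLattice L] (S : Set (OpPair L Y)) (I : X → Y → L)
    (G : Y → L) : Set (X × ((Y → L) → (Y → L))) :=
  {xg | xg.2 ∈ Sg S ∧ G ≤ xg.2 (I xg.1)}

/-- G^{↓↑} = ⋂{g(I_x) : x ∈ X, ⟨f,g⟩ ∈ S, G ⊆ g(I_x)}. -/
def dnup [CompleteResiduatedLattice L] (S : Set (OpPair L Y)) (I : X → Y → L)
    (G : Y → L) : Y → L :=
  upOp I (downOp S I G)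

/-- Σ is S-complete in ⟨X,Y,I⟩. -/
def SComplete [CompleteResiduatedLattice L] (S : Set (OpPair L Y)) (Th : Set (FAI L Y))
    (I : X → Y → L) : Prop :=
  ∀ A B : Y → L, Entails S Th (A, B) ↔ CtxSat S I (A, B)

/-- Σ is an S-base of ⟨X,Y,I⟩. -/
def SBase [CompleteResiduatedLattice L] (S : Set (OpPair L Y)) (Th : Set (FAI L Y))
    (I : X → Y → L) : Prop :=
  SComplete S Th I ∧ ∀ Th' ⊂ Th, ¬ SComplete S Th' I

/-- S-provability: axioms A∪B ⇒ A, assumptions from Th, rule (Cut) and rule (F). -/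
inductive ProvS [CompleteResiduatedLattice L] (S : Set (OpPair L Y)) (Th : Set (FAI L Y)) :
    FAI L Y → Prop
  | ax (A B : Y → L) : ProvS S Th (A ⊔ B, A)
  | hyp {φ : FAI L Y} (h : φ ∈ Th) : ProvS S Th φ
  | cut {A B C D : Y → L} : ProvS S Th (A, B) → ProvS S Th (B ⊔ C, D) → ProvS S Th (A ⊔ C, D)
  | mul {A B : Y → L} {p : OpPair L Y} (hp : p ∈ S) : ProvS S Th (A, B) → ProvS S Th (p.1 A, p.1 B)

/-- Provability using the axioms and (Cut) as the only inference rule. -/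
inductive ProvCut [CompleteResiduatedLattice L] (Th : Set (FAI L Y)) : FAI L Y → Prop
  | ax (A B : Y → L) : ProvCut Th (A ⊔ B, A)
  | hyp {φ : FAI L Y} (h : φ ∈ Th) : ProvCut Th φ
  | cut {A B C D : Y → L} : ProvCut Th (A, B) → ProvCut Th (B ⊔ C, D) → ProvCut Th (A ⊔ C, D)

/-- Residuum a → b = ⋁{c : a ⊗ c ≤ b}. -/
def resid [CompleteResiduatedLattice L] (a b : L) : L := sSup {c | a * c ≤ b}

/-- Subsethood degree S(A,B) = ⋀_{y∈Y} (A(y) → B(y)). -/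
def subDeg [CompleteResiduatedLattice L] (A B : Y → L) : L := ⨅ y, resid (A y) (B y)

/-- c ⊗ B, pointwise. -/
def scMul [CompleteResiduatedLattice L] (c : L) (B : Y → L) : Y → L := fun y => c * B y

/-- ||A ⇒ B||^S_M = ⋁{c ∈ L : M ⊨^S A ⇒ c ⊗ B}. -/
def truthDeg [CompleteResiduatedLattice L] (S : Set (OpPair L Y)) (M A B : Y → L) : L :=
  sSup {c | Sat S M (A, scMul c B)}

/-- ||A ⇒ B||^S_Th = ⋀_{M ∈ Mod^S(Th)} ||A ⇒ B||^S_M. -/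
def entDeg [CompleteResiduatedLattice L] (S : Set (OpPair L Y)) (Th : Set (FAI L Y))
    (A B : Y → L) : L :=
  ⨅ M ∈ ModS S Th, truthDeg S M A B

/-- Immediate consequence operator t^S_Th. -/
def tOp [CompleteResiduatedLattice L] (S : Set (OpPair L Y)) (Th : Set (FAI L Y))
    (M : Y → L) : Y → L :=
  M ⊔ sSup {N | ∃ φ ∈ Th, ∃ p ∈ S, p.1 φ.1 ≤ M ∧ N = p.1 φ.2}

/-- S-pseudo-intents, defined by well-founded recursion on ⊊ (L^Y is finite). -/
noncomputable def IsPseudoIntent [CompleteResiduatedLattice L] [Finite L] [Finite Y]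
    (dn : (Y → L) → (Y → L)) : (Y → L) → Prop :=
  (wellFounded_lt (α := Y → L)).fix
    (fun P rec => P < dn P ∧ ∀ Q, ∀ h : Q < P, rec Q h → dn Q ≤ P)


/-!
Soundness holds because each `f` is a left adjoint and so preserves unions. For completeness, the L-sets `C` with `Σ ⊢ A ⇒ C` are closed under unions, and there
are finitely many, so their union `D` is itself provable from `A`; rule (F) makes `D` a model
of `Σ`, and it contains `A`, so any consequent entailed by `A ⇒ ·` lies below `D` and is
provable. Since `c ↦ c ⊗ B` preserves suprema, the degree `‖A ⇒ B‖_M` is attained, which turns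
the degree statement into the plain one for the single degree `‖A ⇒ B‖_Σ`.
-/

section

variable [CompleteResiduatedLattice L] {S : Set (OpPair L Y)} {Th : Set (FAI L Y)}

theorem _root_.CompleteResiduatedLattice.mul_le_mul_left (a : L) {b c : L} (h : b ≤ c) :
    a * b ≤ a * c := by
  have hsup : a * c = ⨆ x ∈ ({b, c} : Set L), a * x := by
    rw [← CompleteResiduatedLattice.mul_sSup, sSup_pair, sup_eq_right.mpr h]
  rw [hsup]
  exact le_iSup₂_of_le b (Set.mem_insert b {c}) le_rfl

theorem IsParam.gc (hS : IsParam S) {p : OpPair L Y} (hp : p ∈ S) :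
    GaloisConnection p.1 p.2 :=
  hS.1 p hp

theorem scMul_mono {b c : L} (h : b ≤ c) (B : Y → L) : scMul b B ≤ scMul c B := fun y => by
  simpa only [scMul, mul_comm _ (B y)] using
    CompleteResiduatedLattice.mul_le_mul_left (B y) h

theorem scMul_sSup (s : Set L) (B : Y → L) : scMul (sSup s) B = ⨆ c ∈ s, scMul c B := by
  funext y
  simp only [scMul, iSup_apply, mul_comm _ (B y)]
  exact CompleteResiduatedLattice.mul_sSup (B y) s

namespace Sat

variable {M A C D : Y → L}

theorem of_le (hS : IsParam S) (h : Sat S M (A, C)) (hDC : D ≤ C) : Sat S M (A, D) :=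
  fun p hp hA => ((hS.gc hp).monotone_l hDC).trans (h p hp hA)

theorem iSup₂ {ι : Type*} {κ : ι → Sort*} (hS : IsParam S) {C : ∀ i, κ i → Y → L}
    (h : ∀ i j, Sat S M (A, C i j)) : Sat S M (A, ⨆ i, ⨆ j, C i j) := fun p hp hA => by
  rw [(hS.gc hp).l_iSup₂]
  exact iSup₂_le fun i j => h i j p hp hA

end Sat

theorem sat_scMul_truthDeg (hS : IsParam S) (M A B : Y → L) :
    Sat S M (A, scMul (truthDeg S M A B) B) := by
  rw [truthDeg, scMul_sSup]
  exact Sat.iSup₂ hS fun _ hc => hc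

namespace ProvS

variable {A B C D : Y → L}

theorem refl (A : Y → L) : ProvS S Th (A, A) := by
  simpa only [sup_idem] using ProvS.ax (S := S) (Th := Th) A A

theorem trans (h₁ : ProvS S Th (A, B)) (h₂ : ProvS S Th (B, C)) : ProvS S Th (A, C) := by
  simpa only [sup_bot_eq] using h₁.cut (C := ⊥) (by simpa only [sup_bot_eq] using h₂)

theorem of_le (h : ProvS S Th (A, C)) (hDC : D ≤ C) : ProvS S Th (A, D) :=
  h.trans (by simpa only [sup_eq_right.mpr hDC] using ProvS.ax (S := S) (Th := Th) D C)

theorem augment (h : ProvS S Th (A, B)) (C : Y → L) : ProvS S Th (A ⊔ C, B ⊔ C) :=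
  h.cut (refl _)

theorem sup (h₁ : ProvS S Th (A, C)) (h₂ : ProvS S Th (A, D)) : ProvS S Th (A, C ⊔ D) := by
  have h : ProvS S Th (C ⊔ A, C ⊔ D) := by
    simpa only [sup_comm] using h₂.augment C
  simpa only [sup_idem] using h₁.cut h

theorem supClosed_consequents : SupClosed {C | ProvS S Th (A, C)} :=
  fun _ h₁ _ h₂ => sup h₁ h₂

theorem sSup_consequents [Finite L] [Finite Y] :
    ProvS S Th (A, sSup {C | ProvS S Th (A, C)}) :=
  (supClosed_consequents (S := S) (Th := Th) (A := A)).sSup_mem (Set.toFinite _)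
    ((refl A).of_le bot_le) subset_rfl

theorem sat (hS : IsParam S) {φ : FAI L Y} (h : ProvS S Th φ) {M : Y → L}
    (hM : M ∈ ModS S Th) : Sat S M φ := by
  induction h with
  | ax A B => exact fun p hp hAB => ((hS.gc hp).monotone_l le_sup_left).trans hAB
  | hyp hφ => exact hM _ hφ
  | cut _ _ ih₁ ih₂ =>
    intro p hp hAC
    rw [(hS.gc hp).l_sup, sup_le_iff] at hAC
    exact ih₂ p hp (by rw [(hS.gc hp).l_sup]; exact sup_le (ih₁ p hp hAC.1) hAC.2)
  | mul hq _ ih => exact fun p hp => ih _ (hS.2.2 p hp _ hq)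

theorem of_forall_sat [Finite L] [Finite Y] (hS : IsParam S)
    (h : ∀ M ∈ ModS S Th, Sat S M (A, C)) : ProvS S Th (A, C) := by
  set D := sSup {C | ProvS S Th (A, C)}
  have hD : ProvS S Th (A, D) := sSup_consequents
  have hMod : D ∈ ModS S Th := fun φ hφ p hp hle =>
    le_sSup ((hD.of_le hle).trans ((hyp hφ).mul hp))
  exact hD.of_le (h D hMod _ hS.2.1 (le_sSup (refl A)))

end ProvS

end

theorem pavelka_completeness_general
    {L Y : Type*} [CompleteResiduatedLattice L] [Finite L] [Finite Y]
    (S : Set (OpPair L Y)) (hS : IsParam S)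
    (Th : Set (FAI L Y)) (A B : Y → L) :
    sSup {c : L | ProvS S Th (A, scMul c B)} = entDeg S Th A B := by
  apply le_antisymm
  · exact le_iInf₂ fun M hM => sSup_le_sSup fun c hc => hc.sat hS hM
  · refine le_sSup (ProvS.of_forall_sat hS fun M hM => ?_)
    exact (sat_scMul_truthDeg hS M A B).of_le hS (scMul_mono (iInf₂_le M hM) B)

/-- Pavelka-style completeness for finite L and Y: the degree of
S-provability equals the degree of semantic entailment. -/
theorem pavelka_completeness
    {L Y : Type*} [CompleteResiduatedLattice L] [Finite L] [Finite Y] [Nonempty Y]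
    (S : Set (OpPair L Y)) (hS : IsParam S)
    (Th : Set (FAI L Y)) (A B : Y → L) :
    sSup {c : L | ProvS S Th (A, scMul c B)} = entDeg S Th A B :=
  pavelka_completeness_general S hS Th A B

end FAIparam
end

section
/- Let the immediate consequence operator be t^S_Σ(M) = M ∪ ⋃{f(B) : A ⇒ B ∈ Σ, ⟨f, g⟩ ∈ S, f(A) ⊆ M}. Then t^S_Σ is monotone and extensive, and if L and Y are finite, the iterate N obtained by applying t^S_Σ to M at most |L|·|Y| times is a fixed point of t^S_Σ and equals [M]^S_Σ, the least S-model of Σ containing M. -/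
namespace FAIparam

variable {L : Type*} {Y : Type*} {X : Type*}

section Stabilization

variable {α : Type*} [PartialOrder α] {t : α → α} {ρ : α → ℕ}

theorem _root_.isFixedPt_iterate_or_lt_rank (ht : id ≤ t) (hρ : StrictMono ρ) (x : α) (n : ℕ) :
    Function.IsFixedPt t (t^[n] x) ∨ n < ρ (t^[n + 1] x) := by
  have step : ∀ y, Function.IsFixedPt t y ∨ ρ y < ρ (t y) := fun y =>
    (ht y).eq_or_lt.imp Eq.symm (fun h => hρ h)
  induction n with
  | zero => simpa using (step x).imp_right Nat.zero_lt_of_lt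
  | succ n ih =>
    rcases ih with hfix | hlt
    · left
      rwa [Function.iterate_succ_apply', hfix]
    · rw [Function.iterate_succ_apply' t (n + 1)]
      exact (step _).imp_right (fun h => by omega)

theorem _root_.isFixedPt_iterate_of_rank_le (ht : id ≤ t) (hρ : StrictMono ρ) {B : ℕ}
    (hB : ∀ y, ρ y ≤ B) (x : α) : Function.IsFixedPt t (t^[B] x) :=
  (isFixedPt_iterate_or_lt_rank ht hρ x B).resolve_right (hB _).not_gt

end Stabilization

theorem _root_.strictMono_ncard_Iio {α : Type*} [Preorder α] [Finite α] :
    StrictMono fun a : α => (Set.Iio a).ncard :=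
  fun _ _ hab => Set.ncard_lt_ncard (Set.Iio_ssubset_Iio hab)

theorem _root_.StrictMono.sum_pi {ι α : Type*} [Fintype ι] [PartialOrder α] {r : α → ℕ}
    (hr : StrictMono r) : StrictMono fun x : ι → α => ∑ i, r (x i) := by
  intro x y hxy
  obtain ⟨hle, i, hi⟩ := Pi.lt_def.mp hxy
  exact Finset.sum_lt_sum (fun j _ => hr.monotone (hle j)) ⟨i, Finset.mem_univ i, hr hi⟩

theorem _root_.Pi.exists_strictMono_rank_le_card_mul_card {ι α : Type*} [Finite ι] [Finite α]
    [PartialOrder α] :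
    ∃ ρ : (ι → α) → ℕ, StrictMono ρ ∧ ∀ x, ρ x ≤ Nat.card α * Nat.card ι := by
  have := Fintype.ofFinite ι
  refine ⟨fun x => ∑ i, (Set.Iio (x i)).ncard, strictMono_ncard_Iio.sum_pi, fun x => ?_⟩
  calc ∑ i, (Set.Iio (x i)).ncard ≤ ∑ _i : ι, Nat.card α :=
        Finset.sum_le_sum fun i _ => Set.ncard_le_card _
    _ = Nat.card α * Nat.card ι := by
        rw [Finset.sum_const, Finset.card_univ, smul_eq_mul, Nat.card_eq_fintype_card (α := ι),
          mul_comm]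

section ImmediateConsequence

variable [CompleteResiduatedLattice L] (S : Set (OpPair L Y)) (Th : Set (FAI L Y))

theorem tOp_monotone : Monotone (tOp S Th) := by
  intro M M' h
  refine sup_le_sup h (sSup_le_sSup ?_)
  rintro N ⟨φ, hφ, p, hp, hle, rfl⟩
  exact ⟨φ, hφ, p, hp, hle.trans h, rfl⟩

theorem le_tOp (M : Y → L) : M ≤ tOp S Th M := le_sup_left

theorem le_tOp_of_mem {M : Y → L} {φ : FAI L Y} (hφ : φ ∈ Th) {p : OpPair L Y} (hp : p ∈ S)
    (hle : p.1 φ.1 ≤ M) : p.1 φ.2 ≤ tOp S Th M :=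
  le_sup_of_le_right (le_sSup ⟨φ, hφ, p, hp, hle, rfl⟩)

theorem tOp_le_iff_mem_modS {M : Y → L} : tOp S Th M ≤ M ↔ M ∈ ModS S Th := by
  constructor
  · intro h φ hφ p hp hle
    exact (le_tOp_of_mem S Th hφ hp hle).trans h
  · intro hM
    refine sup_le le_rfl (sSup_le ?_)
    rintro _ ⟨φ, hφ, p, hp, hle, rfl⟩
    exact hM φ hφ p hp hle

theorem isFixedPt_tOp_iff_mem_modS {M : Y → L} :
    Function.IsFixedPt (tOp S Th) M ↔ M ∈ ModS S Th :=
  ⟨fun h => (tOp_le_iff_mem_modS S Th).mp h.le,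
    fun h => ((tOp_le_iff_mem_modS S Th).mpr h).antisymm (le_tOp S Th M)⟩

theorem iterate_tOp_eq_clS {M : Y → L} {n : ℕ}
    (hfix : Function.IsFixedPt (tOp S Th) ((tOp S Th)^[n] M)) :
    (tOp S Th)^[n] M = clS S Th M := by
  refine le_antisymm (le_sInf ?_) (sInf_le ⟨(isFixedPt_tOp_iff_mem_modS S Th).mp hfix,
    Function.id_le_iterate_of_id_le (le_tOp S Th) n M⟩)
  rintro P ⟨hP, hMP⟩
  calc (tOp S Th)^[n] M ≤ (tOp S Th)^[n] P := (tOp_monotone S Th).iterate n hMP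
    _ = P := Function.iterate_fixed ((isFixedPt_tOp_iff_mem_modS S Th).mpr hP) n

end ImmediateConsequence

theorem tOp_monotone_extensive_iterate_general
    {L Y : Type*} [CompleteResiduatedLattice L]
    (S : Set (OpPair L Y))
    (Th : Set (FAI L Y)) :
    Monotone (tOp S Th) ∧
    (∀ M : Y → L, M ≤ tOp S Th M) ∧
    (∀ (_hL : Finite L) (_hY : Finite Y), ∀ M : Y → L,
      tOp S Th ((tOp S Th)^[Nat.card L * Nat.card Y] M) =
        (tOp S Th)^[Nat.card L * Nat.card Y] M ∧
      (tOp S Th)^[Nat.card L * Nat.card Y] M = clS S Th M) := by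
  refine ⟨tOp_monotone S Th, le_tOp S Th, fun _ _ M => ?_⟩
  obtain ⟨ρ, hρ, hρB⟩ := Pi.exists_strictMono_rank_le_card_mul_card (ι := Y) (α := L)
  have hfix := isFixedPt_iterate_of_rank_le (le_tOp S Th) hρ hρB M
  exact ⟨hfix, iterate_tOp_eq_clS S Th hfix⟩

/-- the immediate consequence operator is monotone and extensive, and
(for finite L and Y) its |L|·|Y|-fold iterate at M is a fixed point equal to the
least S-model of Σ containing M. -/
theorem tOp_monotone_extensive_iterate
    {L Y : Type*} [CompleteResiduatedLattice L] [Nonempty Y]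
    (S : Set (OpPair L Y)) (hS : IsParam S)
    (Th : Set (FAI L Y)) :
    Monotone (tOp S Th) ∧
    (∀ M : Y → L, M ≤ tOp S Th M) ∧
    (∀ (_hL : Finite L) (_hY : Finite Y), ∀ M : Y → L,
      tOp S Th ((tOp S Th)^[Nat.card L * Nat.card Y] M) =
        (tOp S Th)^[Nat.card L * Nat.card Y] M ∧
      (tOp S Th)^[Nat.card L * Nat.card Y] M = clS S Th M) :=
  tOp_monotone_extensive_iterate_general S Th

end FAIparam
end
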